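/- For a simplicial complex Δ with n vertices, the following are equivalent: (1) Δ is d-convex union representable; (2) there exists a d-convex union representation {V_1, …, V_n} of Δ such that the collection of closures {cl(V_1), …, cl(V_n)} also has nerve Δ, each cl(V_i) is a polytope, and the union ⋃_{i=1}^n V_i is the interior of a polytope; (3) Δ is the nerve of a collection {P_1, …, P_n} of d-dimensional polytopes in ℝ^d whose union is a polytope; (4) Δ is the nerve of a collection {A_1, …, A_n} of closed convex sets in ℝ^d whose union is a closed convex set. -/

import Mathlib

open Set

/-- An abstract simplicial complex on ground set `V`: a collection of finite
subsets of `V` that is closed under inclusion. -/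
def IsSimplicialComplex {V : Type*} (Δ : Set (Finset V)) : Prop :=
  ∀ σ ∈ Δ, ∀ τ : Finset V, τ ⊆ σ → τ ∈ Δ

/-- The nerve of a collection of sets `U i`: the faces are the finite sets `σ`
of indices such that `⋂ i ∈ σ, U i ≠ ∅`, where by convention the empty face
belongs to the nerve iff some `U i` is nonempty. -/
def nerveOf {V E : Type*} (U : V → Set E) : Set (Finset V) :=
  {σ | (∃ i, (U i).Nonempty) ∧ ∃ x, ∀ i ∈ σ, x ∈ U i}

/-- A facet of `Δ` is an inclusion-maximal face. -/
def IsFacet {V : Type*} (Δ : Set (Finset V)) (σ : Finset V) : Prop :=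
  σ ∈ Δ ∧ ∀ τ ∈ Δ, σ ⊆ τ → τ = σ

/-- A free face of `Δ`: a face that is not a facet and is contained in a
unique facet. -/
def IsFreeFace {V : Type*} (Δ : Set (Finset V)) (σ : Finset V) : Prop :=
  σ ∈ Δ ∧ ¬ IsFacet Δ σ ∧ ∃! τ : Finset V, IsFacet Δ τ ∧ σ ⊆ τ

/-- An elementary collapse removes from `Δ` all faces containing a free face. -/
def ElemCollapse {V : Type*} (Δ Γ : Set (Finset V)) : Prop :=
  ∃ σ : Finset V, IsFreeFace Δ σ ∧ Γ = {τ ∈ Δ | ¬ σ ⊆ τ}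

/-- `Δ` collapses onto `Γ` if a (finite) sequence of elementary collapses
leads from `Δ` to `Γ`. -/
def CollapsesTo {V : Type*} (Δ Γ : Set (Finset V)) : Prop :=
  Relation.ReflTransGen ElemCollapse Δ Γ

/-- `Δ` is collapsible if it collapses onto the void complex. -/
def Collapsible {V : Type*} (Δ : Set (Finset V)) : Prop :=
  CollapsesTo Δ (∅ : Set (Finset V))

/-- Euclidean space `ℝ^d`. -/
abbrev Euc (d : ℕ) : Type := EuclideanSpace ℝ (Fin d)

/-- `U` is a `d`-convex union representation of `Δ`: the `U i` are convex open
sets in `ℝ^d`, their union is convex, and their nerve is `Δ`. -/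
def IsCURep {V : Type*} {d : ℕ} (U : V → Set (Euc d)) (Δ : Set (Finset V)) : Prop :=
  (∀ i, Convex ℝ (U i)) ∧ (∀ i, IsOpen (U i)) ∧ Convex ℝ (⋃ i, U i) ∧ nerveOf U = Δ

/-- `Δ` is `d`-convex union representable. -/
def IsCUR {V : Type*} (d : ℕ) (Δ : Set (Finset V)) : Prop :=
  ∃ U : V → Set (Euc d), IsCURep U Δ

/-- `Δ` is convex union representable: `d`-convex union representable for some `d`. -/
def ConvexUnionRepresentable {V : Type*} (Δ : Set (Finset V)) : Prop :=
  ∃ d : ℕ, IsCUR d Δ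

/-- `Δ` is `d`-representable: the nerve of a family of convex sets in `ℝ^d`. -/
def IsRep {V : Type*} (d : ℕ) (Δ : Set (Finset V)) : Prop :=
  ∃ U : V → Set (Euc d), (∀ i, Convex ℝ (U i)) ∧ nerveOf U = Δ

/-- A polytope in `ℝ^d` is the convex hull of finitely many points. -/
def IsPolytope {d : ℕ} (P : Set (Euc d)) : Prop :=
  ∃ S : Finset (Euc d), P = convexHull ℝ (S : Set (Euc d))

/-!
(1) ⇒ (2): choose for every face `σ` a point `x σ ∈ ⋂ i ∈ σ, U i` and a polytope `Q` inside the
open convex set `⋃ i, U i` containing all `x σ` in its interior. Cover `Q` by finitely many small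
homothetic copies of itself and let `P i` be the convex hull of the copies lying in `U i`. This is a
polytope inside `U i`, and by the Lebesgue number lemma the interiors of the `P i` cover the
interior of `Q` and contain the points `x σ`; so `V i = interior (P i)` works.

(2) ⇒ (3): the union of the closures of the `V i` is the closure of `interior P`, which is `P`;
each closure is full-dimensional because `V i` is open and nonempty.

(4) ⇒ (1): cutting the `A i` with a large ball keeps the nerve and makes the sets compact. Compact
sets without a common point have small thickenings without a common point, so for small `ε` the
open convex `ε`-thickenings have the same nerve, and their union, the `ε`-thickening of a convex
set, is convex.
-/

open Metric Filter Topology Pointwise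

section Nerve

variable {ι E : Type*}

lemma nerveOf_mono {U V : ι → Set E} (h : ∀ i, U i ⊆ V i) : nerveOf U ⊆ nerveOf V := by
  rintro σ ⟨⟨j, y, hy⟩, x, hx⟩
  exact ⟨⟨j, y, h j hy⟩, x, fun i hi => h i (hx i hi)⟩

lemma singleton_mem_nerveOf_iff {U : ι → Set E} {j : ι} : {j} ∈ nerveOf U ↔ (U j).Nonempty := by
  refine ⟨fun ⟨_, x, hx⟩ => ⟨x, hx j (Finset.mem_singleton_self j)⟩, fun ⟨y, hy⟩ => ?_⟩
  exact ⟨⟨j, y, hy⟩, y, by simpa using hy⟩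

lemma nerveOf_eq_of_subset_of_forall_exists {U V : ι → Set E} (hVU : ∀ i, V i ⊆ U i)
    (hwit : ∀ σ ∈ nerveOf U, ∃ x, ∀ i ∈ σ, x ∈ V i) : nerveOf V = nerveOf U := by
  refine (nerveOf_mono hVU).antisymm fun σ hσ => ⟨?_, hwit σ hσ⟩
  obtain ⟨j, hj⟩ := hσ.1
  obtain ⟨y, hy⟩ := hwit {j} (singleton_mem_nerveOf_iff.2 hj)
  exact ⟨j, y, hy j (Finset.mem_singleton_self j)⟩

lemma exists_mem_iUnion_of_mem_nerveOf {U : ι → Set E} {σ : Finset ι} (hσ : σ ∈ nerveOf U) :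
    ∃ x ∈ ⋃ i, U i, ∀ i ∈ σ, x ∈ U i := by
  obtain ⟨⟨j, y, hy⟩, x, hx⟩ := hσ
  rcases σ.eq_empty_or_nonempty with rfl | ⟨k, hk⟩
  · exact ⟨y, mem_iUnion_of_mem j hy, by simp⟩
  · exact ⟨x, mem_iUnion_of_mem k (hx k hk), hx⟩

lemma eventually_nerveOf_inter_closedBall_eq [PseudoMetricSpace E] [Finite ι] (A : ι → Set E)
    (c : E) : ∀ᶠ R in atTop, nerveOf (fun i => A i ∩ closedBall c R) = nerveOf A := by
  have key : ∀ σ ∈ nerveOf A, ∀ᶠ R in atTop, σ ∈ nerveOf (fun i => A i ∩ closedBall c R) := by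
    rintro σ ⟨⟨j, y, hy⟩, x, hx⟩
    filter_upwards [eventually_ge_atTop (dist y c), eventually_ge_atTop (dist x c)] with R hyR hxR
    exact ⟨⟨j, y, hy, hyR⟩, x, fun i hi => ⟨hx i hi, hxR⟩⟩
  filter_upwards [(toFinite (nerveOf A)).eventually_all.2 key] with R hR
  exact (nerveOf_mono fun i => inter_subset_left).antisymm hR

lemma eventually_not_exists_forall_mem_thickening [MetricSpace E] [ProperSpace E] {K : ι → Set E}
    (hK : ∀ i, IsCompact (K i)) {σ : Finset ι} (hσ : ¬∃ x, ∀ i ∈ σ, x ∈ K i) :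
    ∀ᶠ ε in 𝓝[>] (0 : ℝ), ¬∃ x, ∀ i ∈ σ, x ∈ thickening ε (K i) := by
  rcases σ.eq_empty_or_nonempty with rfl | ⟨j, hj⟩
  · exact Eventually.of_forall fun _ ⟨x, _⟩ => hσ ⟨x, by simp⟩
  let t : Ioi (0 : ℝ) → Set E := fun ε => ⋂ i ∈ σ, cthickening ε (K i)
  have hdir : Directed (· ⊇ ·) t := fun a b =>
    ⟨⟨min a b, lt_min a.2 (mem_Ioi.1 b.2)⟩,
      iInter₂_mono fun i _ => cthickening_mono (min_le_left _ _) _,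
      iInter₂_mono fun i _ => cthickening_mono (min_le_right _ _) _⟩
  have hempty : cthickening 1 (K j) ∩ ⋂ ε, t ε = ∅ := by
    refine eq_empty_of_forall_notMem fun x hx => hσ ⟨x, fun i hi => ?_⟩
    rw [← (hK i).isClosed.closure_eq, closure_eq_iInter_cthickening]
    exact mem_iInter₂.2 fun ε hε => mem_iInter₂.1 (mem_iInter.1 hx.2 ⟨ε, hε⟩) i hi
  obtain ⟨ε, hε⟩ := (hK j).cthickening.elim_directed_family_closed t
    (fun ε => isClosed_biInter fun i _ => isClosed_cthickening) hempty hdir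
  filter_upwards [Ioo_mem_nhdsGT (lt_min ε.2 one_pos)] with r hr ⟨x, hx⟩
  refine (eq_empty_iff_forall_notMem.1 hε) x ⟨?_, mem_iInter₂.2 fun i hi => ?_⟩
  · exact thickening_subset_cthickening_of_le (hr.2.le.trans (min_le_right _ _)) _ (hx j hj)
  · exact thickening_subset_cthickening_of_le (hr.2.le.trans (min_le_left _ _)) _ (hx i hi)

lemma eventually_nerveOf_thickening_eq [MetricSpace E] [ProperSpace E] [Finite ι] {K : ι → Set E}
    (hK : ∀ i, IsCompact (K i)) :
    ∀ᶠ ε in 𝓝[>] (0 : ℝ), nerveOf (fun i => thickening ε (K i)) = nerveOf K := by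
  have hfar : ∀ σ ∈ {σ : Finset ι | ¬∃ x, ∀ i ∈ σ, x ∈ K i},
      ∀ᶠ ε in 𝓝[>] (0 : ℝ), ¬∃ x, ∀ i ∈ σ, x ∈ thickening ε (K i) :=
    fun σ hσ => eventually_not_exists_forall_mem_thickening hK hσ
  filter_upwards [eventually_mem_nhdsWithin, (toFinite _).eventually_all.2 hfar] with ε hε hfar
  refine (nerveOf_mono fun i => self_subset_thickening hε _).antisymm' ?_
  rintro σ ⟨⟨j, hj⟩, hσ⟩
  refine ⟨⟨j, (thickening_nonempty_iff.1 hj).2⟩, ?_⟩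
  by_contra h
  exact hfar σ h hσ

end Nerve

section Polytope

variable {d : ℕ}

lemma IsPolytope.convex {P : Set (Euc d)} (h : IsPolytope P) : Convex ℝ P := by
  obtain ⟨S, rfl⟩ := h
  exact convex_convexHull ℝ _

lemma IsPolytope.isCompact {P : Set (Euc d)} (h : IsPolytope P) : IsCompact P := by
  obtain ⟨S, rfl⟩ := h
  exact S.finite_toSet.isCompact_convexHull ℝ

lemma IsPolytope.isClosed {P : Set (Euc d)} (h : IsPolytope P) : IsClosed P :=
  h.isCompact.isClosed

lemma isPolytope_convexHull {s : Set (Euc d)} (hs : s.Finite) : IsPolytope (convexHull ℝ s) :=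
  ⟨hs.toFinset, by rw [hs.coe_toFinset]⟩

lemma IsPolytope.closure_interior {P : Set (Euc d)} (hP : IsPolytope P) :
    IsPolytope (closure (interior P)) := by
  rcases (interior P).eq_empty_or_nonempty with h | h
  · simpa [h] using isPolytope_convexHull finite_empty
  · rwa [hP.convex.closure_interior_eq_closure_of_nonempty_interior h, hP.isClosed.closure_eq]

end Polytope

section Pieces

variable {E : Type*} [NormedAddCommGroup E] [NormedSpace ℝ E]

lemma Convex.sum_smul_mem_smul {ι : Type*} {s : Set E} (hs : Convex ℝ s) (hne : s.Nonempty)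
    {t : Finset ι} {w : ι → ℝ} {z : ι → E} (hw : ∀ i ∈ t, 0 ≤ w i) (hz : ∀ i ∈ t, z i ∈ s) :
    ∑ i ∈ t, w i • z i ∈ (∑ i ∈ t, w i) • s := by
  rcases (Finset.sum_nonneg hw).eq_or_lt with h | h
  · have hw0 : ∀ i ∈ t, w i = 0 := (Finset.sum_eq_zero_iff_of_nonneg hw).1 h.symm
    rw [← h, zero_smul_set hne, Finset.sum_eq_zero fun i hi => by rw [hw0 i hi, zero_smul]]
    rfl
  · have := smul_mem_smul_set (a := ∑ i ∈ t, w i) (hs.centerMass_mem hw h hz)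
    rwa [Finset.centerMass, smul_inv_smul₀ h.ne'] at this

lemma Convex.vadd_smul_subset_inter_closedBall {Q : Set E} (hQ : Convex ℝ Q)
    (hb : Bornology.IsBounded Q) {s : ℝ} (hs₀ : 0 ≤ s) (hs₁ : s ≤ 1) {y q : E}
    (hy : y ∈ (1 - s) • Q) (hq : q ∈ Q) :
    y +ᵥ s • Q ⊆ Q ∩ closedBall (y + s • q) (s * diam Q) := by
  rintro _ ⟨_, ⟨p, hp, rfl⟩, rfl⟩
  refine ⟨?_, ?_⟩
  · have := add_mem_add hy (smul_mem_smul_set (a := s) hp)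
    rwa [← hQ.add_smul (by linarith) hs₀, sub_add_cancel, one_smul] at this
  · show dist (y + s • p) (y + s • q) ≤ s * diam Q
    rw [dist_add_left, dist_smul₀, Real.norm_of_nonneg hs₀]
    exact mul_le_mul_of_nonneg_left (dist_le_diam_of_mem hb hp hq) hs₀

def homothet [DecidableEq E] (T : Finset E) (a : T → ℝ) : Finset E :=
  (∑ t, a t • (t : E)) +ᵥ (1 - ∑ t, a t) • T

lemma mem_convexHull_homothet [DecidableEq E] (T : Finset E) {a w : T → ℝ} (ha : ∀ t, 0 ≤ a t)
    (haw : ∀ t, a t ≤ w t) (hw : ∑ t, w t = 1) :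
    ∑ t, w t • (t : E) ∈ convexHull ℝ (homothet T a : Set E) ∧
      convexHull ℝ (homothet T a : Set E) ⊆ convexHull ℝ (T : Set E) ∩
        closedBall (∑ t, w t • (t : E)) ((∑ t, (w t - a t)) * diam (convexHull ℝ (T : Set E))) := by
  set Q := convexHull ℝ (T : Set E)
  have hQ : Convex ℝ Q := convex_convexHull ℝ _
  have hmemQ : ∀ t : T, (t : E) ∈ Q := fun t => subset_convexHull ℝ _ t.2
  have hne : Q.Nonempty :=
    ⟨_, hQ.sum_mem (fun t _ => (ha t).trans (haw t)) hw fun t _ => hmemQ t⟩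
  set s := ∑ t, (w t - a t)
  have hs : 1 - ∑ t, a t = s := by rw [← hw, ← Finset.sum_sub_distrib]
  have hs₀ : 0 ≤ s := Finset.sum_nonneg fun t _ => sub_nonneg.2 (haw t)
  have hs₁ : s ≤ 1 := by rw [← hs]; linarith [Finset.sum_nonneg fun t (_ : t ∈ Finset.univ) => ha t]
  have hy : ∑ t, a t • (t : E) ∈ (1 - s) • Q := by
    rw [← hs, sub_sub_cancel]
    exact hQ.sum_smul_mem_smul hne (fun t _ => ha t) fun t _ => hmemQ t
  obtain ⟨q, hq, hqx⟩ := mem_smul_set.1 <|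
    hQ.sum_smul_mem_smul hne (fun t _ => sub_nonneg.2 (haw t)) fun t _ => hmemQ t
  have hx : ∑ t, w t • (t : E) = ∑ t, a t • (t : E) + s • q := by
    rw [hqx, ← Finset.sum_add_distrib]
    simp only [sub_smul, add_sub_cancel]
  rw [homothet, Finset.coe_vadd_finset, Finset.coe_smul_finset, convexHull_vadd, convexHull_smul,
    hs, hx]
  exact ⟨⟨_, ⟨q, hq, rfl⟩, rfl⟩, hQ.vadd_smul_subset_inter_closedBall
    (T.finite_toSet.isCompact_convexHull ℝ).isBounded hs₀ hs₁ hy hq⟩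

lemma exists_finite_small_convexHull_cover (T : Finset E) {ε : ℝ} (hε : 0 < ε) :
    ∃ 𝓡 : Set (Finset E), 𝓡.Finite ∧ ∀ x ∈ convexHull ℝ (T : Set E), ∃ S ∈ 𝓡,
      x ∈ convexHull ℝ (S : Set E) ∧
        convexHull ℝ (S : Set E) ⊆ convexHull ℝ (T : Set E) ∩ ball x ε := by
  classical
  obtain ⟨N, hN⟩ := exists_nat_gt (T.card * diam (convexHull ℝ (T : Set E)) / ε)
  have hN₀ : (0 : ℝ) < N := lt_of_le_of_lt (by positivity) hN
  refine ⟨range fun k : T → Fin (N + 1) => homothet T fun t => (k t : ℝ) / N, toFinite _, ?_⟩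
  intro x hx
  obtain ⟨w, hw₀, hw₁, rfl⟩ := Finset.mem_convexHull'.1 hx
  rw [← Finset.sum_coe_sort] at hw₁ ⊢
  have hw₀' : ∀ t : T, 0 ≤ w t := fun t => hw₀ t t.2
  -- Rounding the barycentric coordinates of `x` down to multiples of `1 / N` leaves a mass of at
  -- most `card T / N`, spread over a copy of the polytope scaled by that mass.
  set a : T → ℝ := fun t => (⌊N * w t⌋₊ : ℝ) / N
  have haw : ∀ t, a t ≤ w t := fun t =>
    (div_le_iff₀' hN₀).2 (Nat.floor_le (mul_nonneg hN₀.le (hw₀' t)))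
  have hwa : ∀ t : T, w t - a t ≤ 1 / N := fun t => by
    have := Nat.lt_floor_add_one (N * w t)
    calc w t - a t = (N * w t - ⌊N * w t⌋₊) / N := by rw [sub_div, mul_div_cancel_left₀ _ hN₀.ne']
      _ ≤ 1 / N := by gcongr; linarith
  have hk : ∀ t : T, ⌊N * w t⌋₊ < N + 1 := fun t =>
    Nat.lt_succ_of_le <| Nat.floor_le_of_le <| mul_le_of_le_one_right hN₀.le <|
      hw₁ ▸ Finset.single_le_sum (fun t _ => hw₀' t) (Finset.mem_univ t)
  obtain ⟨hxS, hS⟩ := mem_convexHull_homothet T (fun t => by positivity) haw hw₁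
  refine ⟨homothet T a, mem_range.2 ⟨fun t => ⟨_, hk t⟩, rfl⟩, hxS,
    hS.trans (inter_subset_inter_right _ (closedBall_subset_ball ?_))⟩
  calc (∑ t : T, (w t - a t)) * diam (convexHull ℝ (T : Set E))
      ≤ ∑ _t : T, (1 : ℝ) / N * diam (convexHull ℝ (T : Set E)) := by
        rw [← Finset.sum_mul]
        exact mul_le_mul_of_nonneg_right (Finset.sum_le_sum fun t _ => hwa t) diam_nonneg
    _ < ε := by
        rw [Finset.sum_const, Finset.card_univ, Fintype.card_coe, nsmul_eq_mul, ← mul_assoc,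
          mul_one_div, div_mul_eq_mul_div, div_lt_iff₀ hN₀]
        rw [div_lt_iff₀ hε] at hN
        linarith

def pieceHull (𝓡 : Set (Finset E)) (A : Set E) : Set E :=
  convexHull ℝ (⋃ S ∈ {S ∈ 𝓡 | convexHull ℝ (S : Set E) ⊆ A}, (S : Set E))

lemma pieceHull_subset {𝓡 : Set (Finset E)} {A : Set E} (hA : Convex ℝ A) : pieceHull 𝓡 A ⊆ A :=
  convexHull_min (iUnion₂_subset fun _ hS => (subset_convexHull ℝ _).trans hS.2) hA

lemma convexHull_subset_pieceHull {𝓡 : Set (Finset E)} {A : Set E} {S : Finset E} (hS : S ∈ 𝓡)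
    (hSA : convexHull ℝ (S : Set E) ⊆ A) : convexHull ℝ (S : Set E) ⊆ pieceHull 𝓡 A :=
  convexHull_mono (subset_biUnion_of_mem (u := fun S : Finset E => (S : Set E)) ⟨hS, hSA⟩)

lemma mem_interior_pieceHull {𝓡 : Set (Finset E)} {Q U : Set E} {δ : ℝ} (hδ : 0 < δ)
    (hcover : ∀ z ∈ Q, ∃ S ∈ 𝓡, z ∈ convexHull ℝ (S : Set E) ∧
      convexHull ℝ (S : Set E) ⊆ Q ∩ ball z δ)
    {x : E} (hx : x ∈ interior Q) (hU : ball x (2 * δ) ⊆ U) :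
    x ∈ interior (pieceHull 𝓡 (Q ∩ U)) := by
  refine interior_maximal (fun z hz => ?_) (isOpen_interior.inter isOpen_ball)
    ⟨hx, mem_ball_self hδ⟩
  obtain ⟨S, hS, hzS, hSQ⟩ := hcover z (interior_subset hz.1)
  have hball : ball z δ ⊆ U := (ball_subset_ball' (by linarith [mem_ball.1 hz.2])).trans hU
  exact convexHull_subset_pieceHull hS (hSQ.trans (inter_subset_inter_right _ hball)) hzS

lemma isPolytope_pieceHull {d : ℕ} {𝓡 : Set (Finset (Euc d))} (h𝓡 : 𝓡.Finite) (A : Set (Euc d)) :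
    IsPolytope (pieceHull 𝓡 A) :=
  isPolytope_convexHull ((h𝓡.subset (sep_subset _ _)).biUnion fun S _ => S.finite_toSet)

end Pieces

section Representations

variable {ι : Type*} [Finite ι] {d : ℕ} {Δ : Set (Finset ι)}

lemma exists_polytope_lebesgue_witnesses {E : Type*} [NormedAddCommGroup E] [NormedSpace ℝ E]
    [FiniteDimensional ℝ E] {U : ι → Set E} (hopen : ∀ i, IsOpen (U i))
    (hconv : Convex ℝ (⋃ i, U i)) :
    ∃ (T : Finset E) (x : Finset ι → E) (δ : ℝ), 0 < δ ∧
      (∀ z ∈ convexHull ℝ (T : Set E), ∃ i, ball z δ ⊆ U i) ∧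
      ∀ σ ∈ nerveOf U, x σ ∈ interior (convexHull ℝ (T : Set E)) ∧ ∀ i ∈ σ, ball (x σ) δ ⊆ U i := by
  choose! x hxW hxU using fun σ (hσ : σ ∈ nerveOf U) => exists_mem_iUnion_of_mem_nerveOf hσ
  have hX : (x '' nerveOf U).Finite := (toFinite _).image x
  obtain ⟨T, hXT, hTW⟩ :=
    (convex_convexHull ℝ (x '' nerveOf U)).exists_subset_interior_convexHull_finset_of_isCompact
    (hX.isCompact_convexHull ℝ)
    ((isOpen_iUnion hopen).mem_nhdsSet.2 (convexHull_min (image_subset_iff.2 hxW) hconv))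
  obtain ⟨δ₀, hδ₀, hleb⟩ :=
    lebesgue_number_lemma_of_metric (T.finite_toSet.isCompact_convexHull ℝ) hopen hTW
  have hballs : ∀ σ ∈ nerveOf U, ∀ᶠ r in 𝓝[>] (0 : ℝ), ∀ i ∈ σ, ball (x σ) r ⊆ U i := by
    intro σ hσ
    obtain ⟨ε, hε, hball⟩ := Metric.isOpen_iff.1 (isOpen_biInter_finset fun i _ => hopen i) (x σ)
      (mem_iInter₂.2 (hxU σ hσ))
    filter_upwards [Ioo_mem_nhdsGT hε] with r hr i hi
    exact (ball_subset_ball hr.2.le).trans (hball.trans (biInter_subset_of_mem hi))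
  obtain ⟨δ, ⟨hδ, hδδ₀⟩, hδσ⟩ := ((show ∀ᶠ r in 𝓝[>] (0 : ℝ), r ∈ Ioo 0 δ₀ from
    Ioo_mem_nhdsGT hδ₀).and <| (toFinite (nerveOf U)).eventually_all.2 hballs).exists
  refine ⟨T, x, δ, hδ, fun z hz => ?_,
    fun σ hσ => ⟨hXT (subset_convexHull ℝ _ ⟨σ, hσ, rfl⟩), hδσ σ hσ⟩⟩
  obtain ⟨i, hi⟩ := hleb z hz
  exact ⟨i, (ball_subset_ball hδδ₀.le).trans hi⟩

theorem IsCURep.exists_polytopal {U : ι → Set (Euc d)} (hU : IsCURep U Δ) :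
    ∃ V : ι → Set (Euc d), IsCURep V Δ ∧ nerveOf (fun i => closure (V i)) = Δ ∧
      (∀ i, IsPolytope (closure (V i))) ∧
      ∃ P : Set (Euc d), IsPolytope P ∧ (⋃ i, V i) = interior P := by
  obtain ⟨hconv, hopen, hWconv, rfl⟩ := hU
  obtain ⟨T, x, δ, hδ, hleb, hx⟩ := exists_polytope_lebesgue_witnesses hopen hWconv
  set Q := convexHull ℝ (T : Set (Euc d))
  have hQ : Convex ℝ Q := convex_convexHull ℝ _
  obtain ⟨𝓡, h𝓡, hcover⟩ := exists_finite_small_convexHull_cover T (half_pos hδ)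
  set P : ι → Set (Euc d) := fun i => pieceHull 𝓡 (Q ∩ U i)
  have hPconv : ∀ i, Convex ℝ (P i) := fun i => convex_convexHull ℝ _
  have hPpoly : ∀ i, IsPolytope (P i) := fun i => isPolytope_pieceHull h𝓡 _
  have hPQU : ∀ i, P i ⊆ Q ∩ U i := fun i => pieceHull_subset (hQ.inter (hconv i))
  have hmem : ∀ {z i}, z ∈ interior Q → ball z δ ⊆ U i → z ∈ interior (P i) := fun hz hzU =>
    mem_interior_pieceHull (half_pos hδ) hcover hz (by rwa [mul_div_cancel₀ _ two_ne_zero])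
  have hxP : ∀ σ ∈ nerveOf U, ∀ i ∈ σ, x σ ∈ interior (P i) :=
    fun σ hσ i hi => hmem (hx σ hσ).1 ((hx σ hσ).2 i hi)
  have hclosure : ∀ i, closure (interior (P i)) = P i := by
    intro i
    rcases (U i).eq_empty_or_nonempty with h | h
    · rw [subset_empty_iff.1 ((hPQU i).trans (inter_subset_right.trans h.subset)), interior_empty,
        closure_empty]
    · rw [(hPconv i).closure_interior_eq_closure_of_nonempty_interior
        ⟨_, hxP {i} (singleton_mem_nerveOf_iff.2 h) i (Finset.mem_singleton_self i)⟩,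
        (hPpoly i).isClosed.closure_eq]
  have hunion : ⋃ i, interior (P i) = interior Q := by
    refine (iUnion_subset fun i => interior_mono ((hPQU i).trans inter_subset_left)).antisymm
      fun z hz => ?_
    obtain ⟨i, hi⟩ := hleb z (interior_subset hz)
    exact mem_iUnion.2 ⟨i, hmem hz hi⟩
  refine ⟨fun i => interior (P i), ⟨fun i => (hPconv i).interior,
    fun i => isOpen_interior, hunion ▸ hQ.interior, ?_⟩, ?_, fun i => ?_, Q, ⟨T, rfl⟩, hunion⟩
  · exact nerveOf_eq_of_subset_of_forall_exists
      (fun i => interior_subset.trans ((hPQU i).trans inter_subset_right)) fun σ hσ => ⟨_, hxP σ hσ⟩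
  · exact nerveOf_eq_of_subset_of_forall_exists
      (fun i => (hclosure i).trans_subset ((hPQU i).trans inter_subset_right))
      fun σ hσ => ⟨_, fun i hi => subset_closure (hxP σ hσ i hi)⟩
  · simpa only [hclosure] using hPpoly i

theorem exists_fullDim_polytopes_of_closures (hvert : ∀ i, ({i} : Finset ι) ∈ Δ)
    {V : ι → Set (Euc d)} (hV : IsCURep V Δ) (hcl : nerveOf (fun i => closure (V i)) = Δ)
    (hpoly : ∀ i, IsPolytope (closure (V i))) {P : Set (Euc d)} (hP : IsPolytope P)
    (hVP : ⋃ i, V i = interior P) :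
    ∃ P : ι → Set (Euc d), (∀ i, IsPolytope (P i) ∧ affineSpan ℝ (P i) = ⊤) ∧
      nerveOf P = Δ ∧ IsPolytope (⋃ i, P i) := by
  obtain ⟨hconv, hopen, -, hnerve⟩ := hV
  refine ⟨fun i => closure (V i), fun i => ⟨hpoly i, ?_⟩, hcl, ?_⟩
  · rw [← (hconv i).closure.interior_nonempty_iff_affineSpan_eq_top]
    exact (singleton_mem_nerveOf_iff.1 (hnerve ▸ hvert i)).mono (hopen i).subset_interior_closure
  · rw [← closure_iUnion_of_finite, hVP]
    exact hP.closure_interior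

theorem isCUR_of_isClosed_convex {A : ι → Set (Euc d)} (hA : ∀ i, Convex ℝ (A i) ∧ IsClosed (A i))
    (hnerve : nerveOf A = Δ) (hconv : Convex ℝ (⋃ i, A i)) : IsCUR d Δ := by
  obtain ⟨R, hR⟩ := (eventually_nerveOf_inter_closedBall_eq A 0).exists
  have hK : ∀ i, IsCompact (A i ∩ closedBall 0 R) :=
    fun i => (isCompact_closedBall 0 R).inter_left (hA i).2
  obtain ⟨ε, hε⟩ := (eventually_nerveOf_thickening_eq hK).exists
  refine ⟨fun i => thickening ε (A i ∩ closedBall 0 R),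
    fun i => ((hA i).1.inter (convex_closedBall 0 R)).thickening ε, fun i => isOpen_thickening,
    ?_, by rw [hε, hR, hnerve]⟩
  rw [← thickening_iUnion, ← iUnion_inter]
  exact (hconv.inter (convex_closedBall 0 R)).thickening ε

end Representations

theorem polytope_representation_tfae_general {n d : ℕ} (Δ : Set (Finset (Fin n)))
    (hvert : ∀ i : Fin n, ({i} : Finset (Fin n)) ∈ Δ) :
    List.TFAE [
      IsCUR d Δ,
      ∃ V : Fin n → Set (Euc d), IsCURep V Δ ∧
        nerveOf (fun i => closure (V i)) = Δ ∧
        (∀ i, IsPolytope (closure (V i))) ∧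
        ∃ P : Set (Euc d), IsPolytope P ∧ (⋃ i, V i) = interior P,
      ∃ P : Fin n → Set (Euc d),
        (∀ i, IsPolytope (P i) ∧ affineSpan ℝ (P i) = ⊤) ∧
        nerveOf P = Δ ∧ IsPolytope (⋃ i, P i),
      ∃ A : Fin n → Set (Euc d),
        (∀ i, Convex ℝ (A i) ∧ IsClosed (A i)) ∧
        nerveOf A = Δ ∧ Convex ℝ (⋃ i, A i) ∧ IsClosed (⋃ i, A i)] := by
  tfae_have 1 → 2 := fun ⟨_, hU⟩ => hU.exists_polytopal
  tfae_have 2 → 3 := fun ⟨_, hV, hcl, hpoly, _, hP, hVP⟩ =>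
    exists_fullDim_polytopes_of_closures hvert hV hcl hpoly hP hVP
  tfae_have 3 → 4 := fun ⟨P, hP, hnerve, hunion⟩ =>
    ⟨P, fun i => ⟨(hP i).1.convex, (hP i).1.isClosed⟩, hnerve, hunion.convex, hunion.isClosed⟩
  tfae_have 4 → 1 := fun ⟨_, hA, hnerve, hconv, _⟩ => isCUR_of_isClosed_convex hA hnerve hconv
  tfae_finish

/-- **Proposition.** For a simplicial complex `Δ` with `n` vertices, the
following are equivalent: (1) `Δ` is `d`-convex union representable; (2) there
is a `d`-convex union representation `{V i}` of `Δ` whose closures also have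
nerve `Δ`, with each closure a polytope and the union the interior of a
polytope; (3) `Δ` is the nerve of a collection of `d`-dimensional polytopes in
`ℝ^d` whose union is a polytope; (4) `Δ` is the nerve of a collection of
closed convex sets in `ℝ^d` whose union is a closed convex set. -/
theorem polytope_representation_tfae {n d : ℕ} (Δ : Set (Finset (Fin n)))
    (hΔ : IsSimplicialComplex Δ) (hvert : ∀ i : Fin n, ({i} : Finset (Fin n)) ∈ Δ) :
    List.TFAE [
      IsCUR d Δ,
      ∃ V : Fin n → Set (Euc d), IsCURep V Δ ∧
        nerveOf (fun i => closure (V i)) = Δ ∧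
        (∀ i, IsPolytope (closure (V i))) ∧
        ∃ P : Set (Euc d), IsPolytope P ∧ (⋃ i, V i) = interior P,
      ∃ P : Fin n → Set (Euc d),
        (∀ i, IsPolytope (P i) ∧ affineSpan ℝ (P i) = ⊤) ∧
        nerveOf P = Δ ∧ IsPolytope (⋃ i, P i),
      ∃ A : Fin n → Set (Euc d),
        (∀ i, Convex ℝ (A i) ∧ IsClosed (A i)) ∧
        nerveOf A = Δ ∧ Convex ℝ (⋃ i, A i) ∧ IsClosed (⋃ i, A i)] :=
  polytope_representation_tfae_general Δ hvert
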